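/- arXiv:1402.6918 — 5 statements merged into one kernel-verified Lean document; each statement's English description precedes it below -/
import Mathlib

section
/- Suppose K = G ⋈ H is an internal Zappa–Szép product of monoids and H is conical (xy = 1 implies x = 1 and y = 1). Then for all x, y ∈ K, if xy ∈ G then x ∈ G and y ∈ G. -/
namespace ZSPaper

/-- Internal Zappa–Szép product: every element of `K` has a unique `GH`-decomposition
and a unique `HG`-decomposition. -/
structure ZS (K : Type*) [Monoid K] (G H : Submonoid K) : Prop where
  exGH : ∀ k : K, ∃! p : G × H, (p.1 : K) * (p.2 : K) = k
  exHG : ∀ k : K, ∃! p : H × G, (p.1 : K) * (p.2 : K) = k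

variable {K : Type*} [Monoid K] {G H : Submonoid K}

/-- `h ▷ g`, defined by `h * g = (h ▷ g) * (h ◁ g)`. -/
noncomputable def ZS.rtr (zs : ZS K G H) (h : H) (g : G) : G :=
  ((zs.exGH ((h : K) * (g : K))).choose).1

/-- `h ◁ g`, defined by `h * g = (h ▷ g) * (h ◁ g)`. -/
noncomputable def ZS.rtl (zs : ZS K G H) (h : H) (g : G) : H :=
  ((zs.exGH ((h : K) * (g : K))).choose).2

/-- `g ▶ h`, defined by `g * h = (g ▶ h) * (g ◀ h)`. -/
noncomputable def ZS.ltr (zs : ZS K G H) (g : G) (h : H) : H :=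
  ((zs.exHG ((g : K) * (h : K))).choose).1

/-- `g ◀ h`, defined by `g * h = (g ▶ h) * (g ◀ h)`. -/
noncomputable def ZS.ltl (zs : ZS K G H) (g : G) (h : H) : G :=
  ((zs.exHG ((g : K) * (h : K))).choose).2

/-- Right divisibility: `x` is a suffix of `y`. -/
def RDvd {M : Type*} [Monoid M] (x y : M) : Prop := ∃ u, y = u * x

/-- An atom of a monoid. -/
def MAtom {M : Type*} [Monoid M] (a : M) : Prop :=
  a ≠ 1 ∧ ∀ u v : M, a = u * v → u = 1 ∨ v = 1

/-- An atomic monoid: generated by its atoms, with bounded lengths of atomic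
decompositions. -/
def Atomic (M : Type*) [Monoid M] : Prop :=
  (∀ x : M, ∃ l : List M, (∀ a ∈ l, MAtom a) ∧ l.prod = x) ∧
  ∀ x : M, ∃ N : ℕ, ∀ l : List M, (∀ a ∈ l, MAtom a) → l.prod = x → l.length ≤ N

/-- `m` is the least common upper bound of the set `S` with respect to
left divisibility. -/
def IsDvdLUB {M : Type*} [Monoid M] (S : Set M) (m : M) : Prop :=
  (∀ s ∈ S, s ∣ m) ∧ ∀ n, (∀ s ∈ S, s ∣ n) → m ∣ n

/-- `m` is the least common upper bound of `x` and `y` with respect to left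
divisibility. -/
def IsDvdLCM {M : Type*} [Monoid M] (x y m : M) : Prop :=
  x ∣ m ∧ y ∣ m ∧ ∀ n, x ∣ n → y ∣ n → m ∣ n

/-- `d = Δ_x`, the least common upper bound of `{ y \ x : y ∈ M }`, where
`y * (y \ x) = y ∨ x`. -/
def IsDeltaOf {M : Type*} [Monoid M] (x d : M) : Prop :=
  IsDvdLUB {t : M | ∃ y, IsDvdLCM y x (y * t)} d

/-- A Garside structure on a monoid `M` with Garside element `Δ`. -/
structure GarsideStructure (M : Type*) [Monoid M] (Δ : M) : Prop where
  mul_left_cancel : ∀ a b c : M, a * b = a * c → b = c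
  mul_right_cancel : ∀ a b c : M, b * a = c * a → b = c
  atomic : Atomic M
  meet_left : ∀ x y : M, ∃ d, d ∣ x ∧ d ∣ y ∧ ∀ e, e ∣ x → e ∣ y → e ∣ d
  join_left : ∀ x y : M, ∃ m, x ∣ m ∧ y ∣ m ∧ ∀ n, x ∣ n → y ∣ n → m ∣ n
  meet_right : ∀ x y : M, ∃ d, RDvd d x ∧ RDvd d y ∧ ∀ e, RDvd e x → RDvd e y → RDvd e d
  join_right : ∀ x y : M, ∃ m, RDvd x m ∧ RDvd y m ∧ ∀ n, RDvd x n → RDvd y n → RDvd m n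
  balanced : ∀ x, x ∣ Δ ↔ RDvd x Δ
  div_finite : {x : M | x ∣ Δ}.Finite
  div_gen : Submonoid.closure {x : M | x ∣ Δ} = ⊤

end ZSPaper

open ZSPaper Function

/-! Write `x = g₁h₁` and `y = h₂g₂`, and refactor `h₁h₂g₂ = g₃h₃`. Then `xy = (g₁g₃)h₃` lies in `G`,
so uniqueness of `GH`-factorisations forces `h₃ = 1`; hence `(h₁h₂)g₂ = g₃` lies in `G`, uniqueness of
`HG`-factorisations forces `h₁h₂ = 1`, and conicality of `H` gives `h₁ = h₂ = 1`. -/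

namespace ZSPaper.ZS

variable {K : Type*} [Monoid K] {G H : Submonoid K}

theorem eq_and_eq_of_mul_eq_mul_GH (zs : ZS K G H) {g₁ g₂ : G} {h₁ h₂ : H}
    (h : (g₁ : K) * h₁ = g₂ * h₂) : g₁ = g₂ ∧ h₁ = h₂ :=
  Prod.ext_iff.mp <| (zs.exGH _).unique (y₁ := (g₁, h₁)) (y₂ := (g₂, h₂)) rfl h.symm

theorem eq_and_eq_of_mul_eq_mul_HG (zs : ZS K G H) {h₁ h₂ : H} {g₁ g₂ : G}
    (h : (h₁ : K) * g₁ = h₂ * g₂) : h₁ = h₂ ∧ g₁ = g₂ :=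
  Prod.ext_iff.mp <| (zs.exHG _).unique (y₁ := (h₁, g₁)) (y₂ := (h₂, g₂)) rfl h.symm

theorem eq_one_of_mul_mem_GH (zs : ZS K G H) {g : G} {h : H} (hgh : (g : K) * h ∈ G) :
    h = 1 :=
  (zs.eq_and_eq_of_mul_eq_mul_GH (g₂ := ⟨_, hgh⟩) (h₂ := 1) (mul_one _).symm).2

theorem eq_one_of_mul_mem_HG (zs : ZS K G H) {h : H} {g : G} (hhg : (h : K) * g ∈ G) :
    h = 1 :=
  (zs.eq_and_eq_of_mul_eq_mul_HG (h₂ := 1) (g₂ := ⟨_, hhg⟩) (one_mul _).symm).1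

end ZSPaper.ZS

theorem stmt4 {K : Type*} [Monoid K] {G H : Submonoid K} (zs : ZS K G H)
    (hH : ∀ a b : H, a * b = 1 → a = 1 ∧ b = 1) :
    ∀ x y : K, x * y ∈ G → x ∈ G ∧ y ∈ G := by
  intro x y hxy
  obtain ⟨⟨g₁, h₁⟩, rfl, -⟩ := zs.exGH x
  obtain ⟨⟨h₂, g₂⟩, rfl, -⟩ := zs.exHG y
  obtain ⟨⟨g₃, h₃⟩, hswap, -⟩ := zs.exGH (((h₁ * h₂ : H) : K) * g₂)
  have hxy_factor : ((g₁ * g₃ : G) : K) * h₃ = g₁ * h₁ * (h₂ * g₂) := by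
    rw [Submonoid.coe_mul, mul_assoc, hswap, Submonoid.coe_mul]
    simp only [mul_assoc]
  have hh₃ : h₃ = 1 := zs.eq_one_of_mul_mem_GH (hxy_factor ▸ hxy)
  have hg₃ : ((h₁ * h₂ : H) : K) * g₂ ∈ G := by
    rw [← hswap, hh₃, Submonoid.coe_one, mul_one]
    exact g₃.2
  obtain ⟨hh₁, hh₂⟩ := hH h₁ h₂ (zs.eq_one_of_mul_mem_HG hg₃)
  exact ⟨by simp [hh₁], by simp [hh₂]⟩
end

section
/- Suppose K = G ⋈ H is an internal Zappa–Szép product of monoids and H is conical. If a ∈ G is an atom of G, then for every h ∈ H, the element h ▷ a is an atom of G. -/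
open ZSPaper Function

/-!
Rewriting `(h ▷ a)(h ◁ a) = h a` as a `HG`-decomposition shows `a = (h ▷ a) ◀ (h ◁ a)`.
The map `g ↦ g ◀ k` is multiplicative up to a twist, `(u v) ◀ k = (u ◀ (v ▶ k)) (v ◀ k)`, and
only `1` is sent to `1`; so a factorisation `h ▷ a = u v` is carried to a factorisation of `a`,
and a trivial factor there forces `u = 1` or `v = 1`.
-/

namespace ZSPaper.ZS

variable {K : Type*} [Monoid K] {G H : Submonoid K} (zs : ZS K G H)

include zs in
theorem unique_GH {g₁ g₂ : G} {h₁ h₂ : H} (h : (g₁ : K) * h₁ = (g₂ : K) * h₂) :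
    g₁ = g₂ ∧ h₁ = h₂ :=
  Prod.mk.inj ((zs.exGH _).unique h rfl)

include zs in
theorem unique_HG {h₁ h₂ : H} {g₁ g₂ : G} (h : (h₁ : K) * g₁ = (h₂ : K) * g₂) :
    h₁ = h₂ ∧ g₁ = g₂ :=
  Prod.mk.inj ((zs.exHG _).unique h rfl)

theorem rtr_mul_rtl (h : H) (g : G) : (zs.rtr h g : K) * zs.rtl h g = (h : K) * g :=
  (zs.exGH _).choose_spec.1

theorem ltr_mul_ltl (g : G) (h : H) : (zs.ltr g h : K) * zs.ltl g h = (g : K) * h :=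
  (zs.exHG _).choose_spec.1

theorem ltl_rtr_rtl (h : H) (g : G) : zs.ltl (zs.rtr h g) (zs.rtl h g) = g :=
  (zs.unique_HG (by rw [ltr_mul_ltl, rtr_mul_rtl])).2

theorem ltl_mul (u v : G) (h : H) :
    zs.ltl (u * v) h = zs.ltl u (zs.ltr v h) * zs.ltl v h := by
  refine (zs.unique_HG (h₁ := zs.ltr (u * v) h) (h₂ := zs.ltr u (zs.ltr v h)) ?_).2
  rw [ltr_mul_ltl, Submonoid.coe_mul, Submonoid.coe_mul, ← mul_assoc, ltr_mul_ltl, mul_assoc,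
    mul_assoc, ltr_mul_ltl]

theorem eq_one_of_ltl_eq_one {g : G} {h : H} (h1 : zs.ltl g h = 1) : g = 1 := by
  have e : (g : K) * h = (1 : G) * (zs.ltr g h : K) := by
    rw [← ltr_mul_ltl, h1, OneMemClass.coe_one, one_mul, mul_one]
  exact (zs.unique_GH e).1

theorem eq_one_of_rtr_eq_one {h : H} {g : G} (h1 : zs.rtr h g = 1) : g = 1 := by
  have e : (h : K) * g = (zs.rtl h g : K) * (1 : G) := by
    rw [← rtr_mul_rtl, h1, OneMemClass.coe_one, one_mul, mul_one]
  exact (zs.unique_HG e).2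

end ZSPaper.ZS

theorem stmt5_general {K : Type*} [Monoid K] {G H : Submonoid K} (zs : ZS K G H) :
    ∀ (a : G), MAtom a → ∀ h : H, MAtom (zs.rtr h a) := by
  rintro a ⟨ha_ne, ha_atom⟩ h
  refine ⟨fun h1 => ha_ne (zs.eq_one_of_rtr_eq_one h1), fun u v huv => ?_⟩
  have ha := zs.ltl_rtr_rtl h a
  rw [huv, zs.ltl_mul] at ha
  exact (ha_atom _ _ ha.symm).imp zs.eq_one_of_ltl_eq_one zs.eq_one_of_ltl_eq_one

theorem stmt5 {K : Type*} [Monoid K] {G H : Submonoid K} (zs : ZS K G H)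
    (hH : ∀ a b : H, a * b = 1 → a = 1 ∧ b = 1) :
    ∀ (a : G), MAtom a → ∀ h : H, MAtom (zs.rtr h a) :=
  stmt5_general zs
end

section
/- Suppose K = G ⋈ H is an internal Zappa–Szép product of monoids where the submonoids act on each other by bijections. Then for all g, g₁, g₂ ∈ G and h ∈ H: h⁻¹ ▷ (g₁g₂) = (h⁻¹ ▷ g₁)((g₁⁻¹ ▶ h)⁻¹ ▷ g₂) and (g₁g₂) ◀ h⁻¹ = (g₁ ◀ (h ◁ g₂⁻¹)⁻¹)(g₂ ◀ h⁻¹). -/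
/-!
Both identities come from the cocycle rules `h ▷ (g₁g₂) = (h ▷ g₁)((h ◁ g₁) ▷ g₂)` and
`(g₁g₂) ◀ h = (g₁ ◀ (g₂ ▶ h))(g₂ ◀ h)`, which follow from associativity and uniqueness of
factorisations. Writing `g₁ = h ▷ a`, the identity `(h ▷ a) ▶ (h ◁ a) = h` (refactor
`ha = (h ▷ a)(h ◁ a)`) identifies `g₁⁻¹ ▶ h` with `h ◁ a`; writing `g₂ = (h ◁ a) ▷ b`, the cocycle
rule gives `h ▷ (ab) = g₁g₂`. The second identity is the mirror image.
-/

theorem Function.invFun_eq_of_apply_eq {α β : Sort*} [Nonempty α] {f : α → β}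
    (hf : Function.Injective f) {a : α} {b : β} (hab : f a = b) : Function.invFun f b = a :=
  hab ▸ Function.leftInverse_invFun hf a

namespace ZSPaper

open Function

variable {K : Type*} [Monoid K] {G H : Submonoid K} (zs : ZS K G H)

theorem ZS.rtr_mul_rtl_s11 (h : H) (g : G) :
    (zs.rtr h g : K) * zs.rtl h g = h * g :=
  (zs.exGH ((h : K) * g)).choose_spec.1

theorem ZS.ltr_mul_ltl_s11 (g : G) (h : H) :
    (zs.ltr g h : K) * zs.ltl g h = g * h :=
  (zs.exHG ((g : K) * h)).choose_spec.1

variable {zs}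

theorem ZS.rtr_eq_and_rtl_eq {h h' : H} {g g' : G} (e : (g' : K) * h' = h * g) :
    zs.rtr h g = g' ∧ zs.rtl h g = h' := by
  have := (zs.exGH ((h : K) * g)).choose_spec.2 (g', h') e
  exact ⟨(congrArg Prod.fst this).symm, (congrArg Prod.snd this).symm⟩

theorem ZS.ltr_eq_and_ltl_eq {h h' : H} {g g' : G} (e : (h' : K) * g' = g * h) :
    zs.ltr g h = h' ∧ zs.ltl g h = g' := by
  have := (zs.exHG ((g : K) * h)).choose_spec.2 (h', g') e
  exact ⟨(congrArg Prod.fst this).symm, (congrArg Prod.snd this).symm⟩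

variable (zs)

theorem ZS.rtr_mul (h : H) (g₁ g₂ : G) :
    zs.rtr h (g₁ * g₂) = zs.rtr h g₁ * zs.rtr (zs.rtl h g₁) g₂ := by
  refine (ZS.rtr_eq_and_rtl_eq (h' := zs.rtl (zs.rtl h g₁) g₂) ?_).1
  push_cast
  rw [mul_assoc, zs.rtr_mul_rtl_s11, ← mul_assoc, zs.rtr_mul_rtl_s11, mul_assoc]

theorem ZS.ltl_mul_s11 (h : H) (g₁ g₂ : G) :
    zs.ltl (g₁ * g₂) h = zs.ltl g₁ (zs.ltr g₂ h) * zs.ltl g₂ h := by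
  refine (ZS.ltr_eq_and_ltl_eq (h' := zs.ltr g₁ (zs.ltr g₂ h)) ?_).2
  push_cast
  rw [← mul_assoc, zs.ltr_mul_ltl_s11, mul_assoc, zs.ltr_mul_ltl_s11, mul_assoc]

theorem ZS.ltr_rtr_rtl (h : H) (g : G) : zs.ltr (zs.rtr h g) (zs.rtl h g) = h :=
  (ZS.ltr_eq_and_ltl_eq (zs.rtr_mul_rtl_s11 h g).symm).1

theorem ZS.rtl_ltr_ltl (g : G) (h : H) : zs.rtl (zs.ltr g h) (zs.ltl g h) = h :=
  (ZS.rtr_eq_and_rtl_eq (zs.ltr_mul_ltl_s11 g h).symm).2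

theorem ZS.invFun_rtr_mul (hrtr : ∀ h : H, Bijective (zs.rtr h))
    (hltr : ∀ g : G, Injective (zs.ltr g)) (g₁ g₂ : G) (h : H) :
    invFun (zs.rtr h) (g₁ * g₂)
      = invFun (zs.rtr h) g₁ * invFun (zs.rtr (invFun (zs.ltr g₁) h)) g₂ := by
  obtain ⟨a, rfl⟩ := (hrtr h).2 g₁
  rw [invFun_eq_of_apply_eq (hltr _) (zs.ltr_rtr_rtl h a)]
  obtain ⟨b, rfl⟩ := (hrtr (zs.rtl h a)).2 g₂
  rw [leftInverse_invFun (hrtr h).1, leftInverse_invFun (hrtr _).1]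
  exact invFun_eq_of_apply_eq (hrtr h).1 (zs.rtr_mul h a b)

theorem ZS.invFun_ltl_mul (hltl : ∀ h : H, Bijective (fun g : G => zs.ltl g h))
    (hrtl : ∀ g : G, Injective (fun h : H => zs.rtl h g)) (g₁ g₂ : G) (h : H) :
    invFun (fun g : G => zs.ltl g h) (g₁ * g₂)
      = invFun (fun g : G => zs.ltl g (invFun (fun h' : H => zs.rtl h' g₂) h)) g₁ *
        invFun (fun g : G => zs.ltl g h) g₂ := by
  obtain ⟨b, rfl⟩ := (hltl h).2 g₂
  rw [invFun_eq_of_apply_eq (hrtl _) (zs.rtl_ltr_ltl b h)]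
  obtain ⟨a, rfl⟩ := (hltl (zs.ltr b h)).2 g₁
  rw [leftInverse_invFun (hltl h).1, leftInverse_invFun (hltl _).1]
  exact invFun_eq_of_apply_eq (hltl h).1 (zs.ltl_mul_s11 h a b)

end ZSPaper

open ZSPaper Function

theorem stmt11 {K : Type*} [Monoid K] {G H : Submonoid K} (zs : ZS K G H)
    (hb₁ : ∀ h : H, Function.Bijective (zs.rtr h))
    (hb₂ : ∀ h : H, Function.Bijective (fun g : G => zs.ltl g h))
    (hb₃ : ∀ g : G, Function.Bijective (fun h : H => zs.rtl h g))
    (hb₄ : ∀ g : G, Function.Bijective (zs.ltr g)) :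
    ∀ (g₁ g₂ : G) (h : H),
      invFun (zs.rtr h) (g₁ * g₂)
        = invFun (zs.rtr h) g₁ *
          invFun (zs.rtr (invFun (zs.ltr g₁) h)) g₂ ∧
      invFun (fun g : G => zs.ltl g h) (g₁ * g₂)
        = invFun (fun g : G => zs.ltl g (invFun (fun h' : H => zs.rtl h' g₂) h)) g₁ *
          invFun (fun g : G => zs.ltl g h) g₂ :=
  fun g₁ g₂ h =>
    ⟨zs.invFun_rtr_mul hb₁ (fun g => (hb₄ g).1) g₁ g₂ h,
      zs.invFun_ltl_mul hb₂ (fun g => (hb₃ g).1) g₁ g₂ h⟩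
end

section
/- Suppose K = G ⋈ H is an internal Zappa–Szép product of cancellative, conical monoids G and H that act on each other by injections. Then the left-divisibility relation ≼ and the right-divisibility relation ≽ on K are partial orders, and their restrictions to G × G and H × H coincide with the corresponding divisibility relations of G and H respectively. -/
open ZSPaper Function


/-
Uniqueness of factorisation transports cancellation from `G` and `H` to `K`: for `x = g₁ h₁` and
`y = g₂ h₂`, the equation `g x = g y` compares the factorisations `(g g₁) h₁` and `(g g₂) h₂`;
left multiplication by `h`, and the right-hand versions, use `HG`-factorisations instead.
In the now cancellative `K`, `x y = 1` with `x = g h`, `y = h' g'` yields `(h h') (g' g) = 1`, so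
conicality of `H` and `G` gives `x = y = 1`. Divisibility in a cancellative conical monoid is
antisymmetric, and comparing the factorisations of `g₂ = g₁ (g h)` shows that `g₁ ∣ g₂` in `G`.
-/

namespace ZSPaper

def Conical (M : Type*) [Monoid M] : Prop :=
  ∀ x y : M, x * y = 1 → x = 1 ∧ y = 1

def UniqueFactorization {K : Type*} [Monoid K] (A B : Submonoid K) : Prop :=
  ∀ k : K, ∃! p : A × B, (p.1 : K) * p.2 = k

section Order

variable {M : Type*} [Monoid M]

theorem Conical.op (hM : Conical M) : Conical Mᵐᵒᵖ := fun x y hxy => by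
  obtain ⟨hy, hx⟩ := hM y.unop x.unop (congrArg MulOpposite.unop hxy)
  exact ⟨congrArg MulOpposite.op hx, congrArg MulOpposite.op hy⟩

theorem isPartialOrder_dvd_of_conical [IsLeftCancelMul M] (hM : Conical M) :
    IsPartialOrder M (· ∣ ·) where
  refl := dvd_refl
  trans _ _ _ := dvd_trans
  antisymm := by
    rintro a _ ⟨u, rfl⟩ ⟨v, hv⟩
    have huv : u * v = 1 := mul_left_cancel (a := a) (by rw [← mul_assoc, ← hv, mul_one])
    rw [(hM u v huv).1, mul_one]

theorem isPartialOrder_rightDvd_of_conical [IsRightCancelMul M] (hM : Conical M) :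
    IsPartialOrder M (· ∣ᵣ ·) where
  refl := RightDvd.refl
  trans _ _ _ := RightDvd.trans
  antisymm _ _ hab hba :=
    have := isPartialOrder_dvd_of_conical hM.op
    MulOpposite.op_injective <|
      antisymm (rightDvd_iff_op_dvd_op.1 hab) (rightDvd_iff_op_dvd_op.1 hba)

end Order

namespace UniqueFactorization

variable {K : Type*} [Monoid K] {A B : Submonoid K}

theorem mul_eq_mul_iff (hAB : UniqueFactorization A B) {a₁ a₂ : A} {b₁ b₂ : B} :
    (a₁ : K) * b₁ = a₂ * b₂ ↔ a₁ = a₂ ∧ b₁ = b₂ :=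
  ⟨fun h => Prod.ext_iff.1 ((hAB _).unique (y₁ := (a₁, b₁)) (y₂ := (a₂, b₂)) h rfl),
    fun ⟨ha, hb⟩ => ha ▸ hb ▸ rfl⟩

theorem isLeftRegular_coe (hAB : UniqueFactorization A B) [IsLeftCancelMul A] (a : A) :
    IsLeftRegular (a : K) := by
  intro x y hxy
  obtain ⟨⟨a₁, b₁⟩, rfl : (a₁ : K) * b₁ = x, -⟩ := hAB x
  obtain ⟨⟨a₂, b₂⟩, rfl : (a₂ : K) * b₂ = y, -⟩ := hAB y
  have : ((a * a₁ : A) : K) * b₁ = (a * a₂ : A) * b₂ := by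
    simpa only [Submonoid.coe_mul, mul_assoc] using hxy
  obtain ⟨ha, rfl⟩ := hAB.mul_eq_mul_iff.1 this
  rw [mul_left_cancel ha]

theorem isRightRegular_coe (hAB : UniqueFactorization A B) [IsRightCancelMul B] (b : B) :
    IsRightRegular (b : K) := by
  intro x y hxy
  obtain ⟨⟨a₁, b₁⟩, rfl : (a₁ : K) * b₁ = x, -⟩ := hAB x
  obtain ⟨⟨a₂, b₂⟩, rfl : (a₂ : K) * b₂ = y, -⟩ := hAB y
  have : (a₁ : K) * (b₁ * b : B) = a₂ * (b₂ * b : B) := by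
    simpa only [Submonoid.coe_mul, mul_assoc] using hxy
  obtain ⟨rfl, hb⟩ := hAB.mul_eq_mul_iff.1 this
  rw [mul_right_cancel hb]

theorem coe_dvd_coe_iff (hAB : UniqueFactorization A B) (a₁ a₂ : A) :
    (a₁ : K) ∣ a₂ ↔ a₁ ∣ a₂ := by
  refine ⟨fun ⟨k, hk⟩ => ?_, fun ⟨a, ha⟩ => ⟨a, by rw [ha, Submonoid.coe_mul]⟩⟩
  obtain ⟨⟨a, b⟩, rfl : (a : K) * b = k, -⟩ := hAB k
  have : ((a₁ * a : A) : K) * b = a₂ * (1 : B) := by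
    rw [Submonoid.coe_mul, OneMemClass.coe_one, mul_one, hk, mul_assoc]
  exact ⟨a, (hAB.mul_eq_mul_iff.1 this).1.symm⟩

theorem coe_rightDvd_coe_iff (hAB : UniqueFactorization A B) (b₁ b₂ : B) :
    (b₁ : K) ∣ᵣ b₂ ↔ b₁ ∣ᵣ b₂ := by
  refine ⟨fun ⟨k, hk⟩ => ?_, fun ⟨b, hb⟩ => ⟨b, by rw [hb, Submonoid.coe_mul]⟩⟩
  obtain ⟨⟨a, b⟩, rfl : (a : K) * b = k, -⟩ := hAB k
  have : (a : K) * (b * b₁ : B) = (1 : A) * b₂ := by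
    rw [Submonoid.coe_mul, OneMemClass.coe_one, one_mul, hk, mul_assoc]
  exact ⟨b, (hAB.mul_eq_mul_iff.1 this).2.symm⟩

end UniqueFactorization

namespace ZS

variable {K : Type*} [Monoid K] {G H : Submonoid K}

theorem isLeftCancelMul (zs : ZS K G H) [IsLeftCancelMul G] [IsLeftCancelMul H] :
    IsLeftCancelMul K where
  mul_left_cancel k := by
    obtain ⟨⟨g, h⟩, rfl : (g : K) * h = k, -⟩ := zs.exGH k
    exact (UniqueFactorization.isLeftRegular_coe zs.exGH g).mul
      (UniqueFactorization.isLeftRegular_coe zs.exHG h)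

theorem isRightCancelMul (zs : ZS K G H) [IsRightCancelMul G] [IsRightCancelMul H] :
    IsRightCancelMul K where
  mul_right_cancel k := by
    obtain ⟨⟨g, h⟩, rfl : (g : K) * h = k, -⟩ := zs.exGH k
    exact (UniqueFactorization.isRightRegular_coe zs.exHG g).mul
      (UniqueFactorization.isRightRegular_coe zs.exGH h)

theorem conical [IsDedekindFiniteMonoid K] (zs : ZS K G H) (hG : Conical G) (hH : Conical H) :
    Conical K := by
  intro x y hxy
  obtain ⟨⟨g, h⟩, rfl : (g : K) * h = x, -⟩ := zs.exGH x
  obtain ⟨⟨h', g'⟩, rfl : (h' : K) * g' = y, -⟩ := zs.exHG y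
  have hyx : (h * h' * g' : K) * g = 1 :=
    mul_eq_one_comm.1 (by simpa only [mul_assoc] using hxy)
  have : ((h * h' : H) : K) * (g' * g : G) = (1 : H) * (1 : G) := by
    simpa only [Submonoid.coe_mul, OneMemClass.coe_one, mul_one, mul_assoc] using hyx
  obtain ⟨hH1, hG1⟩ := UniqueFactorization.mul_eq_mul_iff zs.exHG |>.1 this
  obtain ⟨rfl, rfl⟩ := hH h h' hH1
  obtain ⟨rfl, rfl⟩ := hG g' g hG1
  simp

end ZS

end ZSPaper

theorem stmt13_general {K : Type*} [Monoid K] {G H : Submonoid K} (zs : ZS K G H)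
    (hGl : ∀ a b c : G, a * b = a * c → b = c)
    (hGr : ∀ a b c : G, b * a = c * a → b = c)
    (hHl : ∀ a b c : H, a * b = a * c → b = c)
    (hHr : ∀ a b c : H, b * a = c * a → b = c)
    (hGcon : ∀ a b : G, a * b = 1 → a = 1 ∧ b = 1)
    (hHcon : ∀ a b : H, a * b = 1 → a = 1 ∧ b = 1) :
    IsPartialOrder K (· ∣ ·) ∧
    IsPartialOrder K (fun x y => RDvd x y) ∧
    (∀ g₁ g₂ : G, ((g₁ : K) ∣ (g₂ : K)) ↔ g₁ ∣ g₂) ∧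
    (∀ g₁ g₂ : G, RDvd (g₁ : K) (g₂ : K) ↔ RDvd g₁ g₂) ∧
    (∀ h₁ h₂ : H, ((h₁ : K) ∣ (h₂ : K)) ↔ h₁ ∣ h₂) ∧
    (∀ h₁ h₂ : H, RDvd (h₁ : K) (h₂ : K) ↔ RDvd h₁ h₂) := by
  have : IsLeftCancelMul G := ⟨hGl⟩
  have : IsRightCancelMul G := ⟨fun a b c => hGr a b c⟩
  have : IsLeftCancelMul H := ⟨hHl⟩
  have : IsRightCancelMul H := ⟨fun a b c => hHr a b c⟩
  have := zs.isLeftCancelMul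
  have := zs.isRightCancelMul
  have hK : Conical K := zs.conical hGcon hHcon
  have hGH : UniqueFactorization G H := zs.exGH
  have hHG : UniqueFactorization H G := zs.exHG
  exact ⟨isPartialOrder_dvd_of_conical hK, isPartialOrder_rightDvd_of_conical hK,
    hGH.coe_dvd_coe_iff, hHG.coe_rightDvd_coe_iff, hHG.coe_dvd_coe_iff, hGH.coe_rightDvd_coe_iff⟩

theorem stmt13 {K : Type*} [Monoid K] {G H : Submonoid K} (zs : ZS K G H)
    (hGl : ∀ a b c : G, a * b = a * c → b = c)
    (hGr : ∀ a b c : G, b * a = c * a → b = c)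
    (hHl : ∀ a b c : H, a * b = a * c → b = c)
    (hHr : ∀ a b c : H, b * a = c * a → b = c)
    (hGcon : ∀ a b : G, a * b = 1 → a = 1 ∧ b = 1)
    (hHcon : ∀ a b : H, a * b = 1 → a = 1 ∧ b = 1)
    (hi₁ : ∀ h : H, Function.Injective (zs.rtr h))
    (hi₂ : ∀ h : H, Function.Injective (fun g : G => zs.ltl g h))
    (hi₃ : ∀ g : G, Function.Injective (fun h : H => zs.rtl h g))
    (hi₄ : ∀ g : G, Function.Injective (zs.ltr g)) :
    IsPartialOrder K (· ∣ ·) ∧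
    IsPartialOrder K (fun x y => RDvd x y) ∧
    (∀ g₁ g₂ : G, ((g₁ : K) ∣ (g₂ : K)) ↔ g₁ ∣ g₂) ∧
    (∀ g₁ g₂ : G, RDvd (g₁ : K) (g₂ : K) ↔ RDvd g₁ g₂) ∧
    (∀ h₁ h₂ : H, ((h₁ : K) ∣ (h₂ : K)) ↔ h₁ ∣ h₂) ∧
    (∀ h₁ h₂ : H, RDvd (h₁ : K) (h₂ : K) ↔ RDvd h₁ h₂) :=
  stmt13_general zs hGl hGr hHl hHr hGcon hHcon
end

section
/- If K = G ⋈ H is an internal Zappa–Szép product of monoids and K is a Garside monoid, then G and H are parabolic submonoids of K; in particular, G and H are Garside monoids, and if Δ = d_G d_H is the GH-decomposition of a Garside element Δ of K, then d_G is a balanced element with Div(d_G) = 𝒟 ∩ G, which is a Garside element of G (and similarly for H). -/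
/-!
Write `Δ = d_G d_H = d_H' d_G'`. Uniqueness of the two decompositions makes `G` closed under
factors (`K` has no nontrivial invertible elements), so divisibility, atoms and gcds in `G` are
those of `K`, and the lcm in `G` is the `G`-part of the lcm in `K`. The same uniqueness shows that
the left divisors of `d_G` are `𝒟 ∩ G` and its right divisors are those of `d_G'`. Balancedness
of `Δ` then gives `d_G' = v d_G` and `d_G = d_G' w`, so `d_G = v d_G w`, and atomicity forces
`v = 1`: `d_G = d_G'` is balanced with divisor set `𝒟 ∩ G`, and the Garside axioms restrict to
`G`. The factor `H` is handled by the symmetric argument.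
-/

namespace ZSPaper

section Atomic

variable {M : Type*} [Monoid M]

lemma Atomic.eq_one_of_eq_mul_mul (hM : Atomic M) {a b c : M} (h : a = b * a * c) :
    b = 1 ∧ c = 1 := by
  have hpow (n : ℕ) : a = b ^ n * a * c ^ n := by
    induction n with
    | zero => simp
    | succ n ih =>
      calc a = b * (b ^ n * a * c ^ n) * c := by rw [← ih, ← h]
        _ = b ^ (n + 1) * a * c ^ (n + 1) := by
          rw [pow_succ' b, pow_succ c]; simp only [mul_assoc]
  obtain ⟨lb, hlb, rfl⟩ := hM.1 b
  obtain ⟨la, hla, hpa⟩ := hM.1 a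
  obtain ⟨lc, hlc, rfl⟩ := hM.1 c
  obtain ⟨N, hN⟩ := hM.2 a
  -- `a = bⁿ a cⁿ` has atomic decompositions of unbounded length unless `b` and `c` have empty ones.
  have hlen (n : ℕ) : n * lb.length + (la.length + n * lc.length) ≤ N := by
    simpa using hN ((List.replicate n lb).flatten ++ la ++ (List.replicate n lc).flatten)
      (by simp only [List.mem_append, List.mem_flatten, List.mem_replicate]; grind)
      (by simp only [List.prod_append, List.prod_flatten, List.map_replicate, List.prod_replicate,
        hpa]; exact (hpow n).symm)
  have hb : lb.length = 0 := by nlinarith [hlen (N + 1)]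
  have hc : lc.length = 0 := by nlinarith [hlen (N + 1)]
  simp [List.length_eq_zero_iff.1 hb, List.length_eq_zero_iff.1 hc]

lemma Atomic.eq_one_of_mul_eq_one (hM : Atomic M) : ∀ x y : M, x * y = 1 → x = 1 :=
  fun x y h => (hM.eq_one_of_eq_mul_mul (a := 1) (b := x) (c := y) (by rw [mul_one, h])).1

end Atomic

section ZappaSzep

variable {K : Type*} [Monoid K] {G H : Submonoid K}

lemma ZS.swap (zs : ZS K G H) : ZS K H G := ⟨zs.exHG, zs.exGH⟩

lemma ZS.eq_of_mul_eq (zs : ZS K G H) {g₁ g₂ : G} {h₁ h₂ : H}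
    (e : (g₁ : K) * h₁ = g₂ * h₂) : g₁ = g₂ ∧ h₁ = h₂ :=
  Prod.mk_inj.1 ((zs.exGH _).unique (y₁ := (g₁, h₁)) (y₂ := (g₂, h₂)) e rfl)

lemma ZS.dvd_of_dvd_mul (zs : ZS K G H) {x : K} (hx : x ∈ G) {g : G} {h : H}
    (hdvd : x ∣ g * h) : x ∣ g := by
  obtain ⟨u, hu⟩ := hdvd
  obtain ⟨⟨g', h'⟩, hu', -⟩ := zs.exGH u
  have hg : ⟨x, hx⟩ * g' = g := (zs.eq_of_mul_eq (h₁ := h') <| by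
    rw [Submonoid.coe_mul, mul_assoc, hu', hu]).1
  exact ⟨g', congrArg Subtype.val hg.symm⟩

lemma ZS.rdvd_of_rdvd_mul (zs : ZS K G H) {x : K} (hx : x ∈ G) {h : H} {g : G}
    (hdvd : RDvd x (h * g)) : RDvd x g := by
  obtain ⟨u, hu⟩ := hdvd
  obtain ⟨⟨h', g'⟩, hu', -⟩ := zs.exHG u
  have hg : g' * ⟨x, hx⟩ = g := (zs.swap.eq_of_mul_eq (g₁ := h') <| by
    rw [Submonoid.coe_mul, ← mul_assoc, hu', hu]).2
  exact ⟨g', congrArg Subtype.val hg.symm⟩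

lemma ZS.mem_of_mul_mem (zs : ZS K G H) (hK : ∀ x y : K, x * y = 1 → x = 1)
    {x y : K} (hxy : x * y ∈ G) : x ∈ G ∧ y ∈ G := by
  obtain ⟨⟨g₁, h₁⟩, hx, -⟩ := zs.exGH x
  obtain ⟨⟨h₂, g₂⟩, hy, -⟩ := zs.exHG y
  obtain ⟨⟨g₃, h₃⟩, hhg, -⟩ := zs.exGH ((h₁ * h₂ : H) * (g₂ : K))
  dsimp only at hx hy hhg
  -- `x * y = (g₁ * g₃) * h₃` lies in `G`, so `h₃ = 1` and then `(h₁ * h₂) * g₂ = 1 * g₃`.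
  have h₃_eq : h₃ = 1 := (zs.eq_of_mul_eq (g₁ := g₁ * g₃) (g₂ := ⟨x * y, hxy⟩) (h₂ := 1) <| by
    change (g₁ : K) * g₃ * h₃ = x * y * 1
    rw [mul_one, mul_assoc, hhg, ← hx, ← hy, Submonoid.coe_mul]; simp only [mul_assoc]).2
  have h₁h₂_eq : h₁ * h₂ = 1 := (zs.swap.eq_of_mul_eq (g₁ := h₁ * h₂) (h₁ := g₂) (g₂ := 1)
    (h₂ := g₃) <| by rw [← hhg, h₃_eq]; simp).1
  have h₁_eq : (h₁ : K) = 1 := hK _ _ (congrArg Subtype.val h₁h₂_eq)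
  have h₂_eq : (h₂ : K) = 1 := by simpa [h₁_eq] using congrArg Subtype.val h₁h₂_eq
  rw [← hx, ← hy, h₁_eq, h₂_eq, mul_one, one_mul]
  exact ⟨g₁.2, g₂.2⟩

lemma ZS.coe_dvd_coe_iff (zs : ZS K G H) (hK : ∀ x y : K, x * y = 1 → x = 1) {x y : G} :
    (x : K) ∣ y ↔ x ∣ y := by
  refine ⟨fun ⟨c, hc⟩ => ?_, fun ⟨c, hc⟩ => ⟨c, by rw [hc, Submonoid.coe_mul]⟩⟩
  have hcG : c ∈ G := (zs.mem_of_mul_mem hK (hc ▸ y.2)).2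
  exact ⟨⟨c, hcG⟩, Subtype.ext hc⟩

lemma ZS.coe_rdvd_coe_iff (zs : ZS K G H) (hK : ∀ x y : K, x * y = 1 → x = 1) {x y : G} :
    RDvd (x : K) y ↔ RDvd x y := by
  refine ⟨fun ⟨c, hc⟩ => ?_, fun ⟨c, hc⟩ => ⟨c, by rw [hc, Submonoid.coe_mul]⟩⟩
  have hcG : c ∈ G := (zs.mem_of_mul_mem hK (hc ▸ y.2)).1
  exact ⟨⟨c, hcG⟩, Subtype.ext hc⟩

lemma ZS.forall_mem_of_prod_mem (zs : ZS K G H) (hK : ∀ x y : K, x * y = 1 → x = 1) :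
    ∀ {l : List K}, l.prod ∈ G → ∀ a ∈ l, a ∈ G
  | [], _ => by simp
  | a :: l, h => by
    rw [List.prod_cons] at h
    have ⟨ha, hl⟩ := zs.mem_of_mul_mem hK h
    exact List.forall_mem_cons.2 ⟨ha, zs.forall_mem_of_prod_mem hK hl⟩

lemma ZS.mAtom_coe_iff (zs : ZS K G H) (hK : ∀ x y : K, x * y = 1 → x = 1) {a : G} :
    MAtom (a : K) ↔ MAtom a := by
  refine ⟨fun ⟨ha, hfac⟩ => ⟨fun h => ha (by rw [h]; rfl), fun u v huv => ?_⟩,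
    fun ⟨ha, hfac⟩ => ⟨fun h => ha (Subtype.ext h), fun u v huv => ?_⟩⟩
  · exact (hfac u v (congrArg Subtype.val huv)).imp Subtype.ext Subtype.ext
  · have ⟨hu, hv⟩ := zs.mem_of_mul_mem hK (huv ▸ a.2)
    exact (hfac ⟨u, hu⟩ ⟨v, hv⟩ (Subtype.ext huv)).imp
      (congrArg Subtype.val) (congrArg Subtype.val)

lemma ZS.atomic (zs : ZS K G H) (hA : Atomic K) : Atomic G := by
  have hK := hA.eq_one_of_mul_eq_one
  refine ⟨fun x => ?_, fun x => ?_⟩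
  · obtain ⟨l, hl, hprod⟩ := hA.1 x
    lift l to List G using zs.forall_mem_of_prod_mem hK (hprod ▸ x.2)
    refine ⟨l, fun a ha => (zs.mAtom_coe_iff hK).1 (hl _ (List.mem_map_of_mem ha)), ?_⟩
    exact Subtype.ext (by rw [Submonoid.coe_list_prod, hprod])
  · obtain ⟨N, hN⟩ := hA.2 x
    refine ⟨N, fun l hl hprod => ?_⟩
    have hatoms : ∀ a ∈ l.map Subtype.val, MAtom a := by
      simp only [List.mem_map]
      rintro _ ⟨a, ha, rfl⟩
      exact (zs.mAtom_coe_iff hK).2 (hl a ha)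
    simpa using hN _ hatoms (by rw [← Submonoid.coe_list_prod, hprod])

lemma ZS.dvd_iff_of_mul_eq (zs : ZS K G H) (hK : ∀ x y : K, x * y = 1 → x = 1) {Δ : K} {g : G}
    {h : H} (hgh : (g : K) * h = Δ) (x : K) : x ∣ (g : K) ↔ x ∣ Δ ∧ x ∈ G := by
  refine ⟨fun hx => ⟨hgh ▸ hx.mul_right _, ?_⟩,
    fun ⟨hx, hxG⟩ => zs.dvd_of_dvd_mul hxG (hgh ▸ hx)⟩
  obtain ⟨u, hu⟩ := hx
  exact (zs.mem_of_mul_mem hK (hu ▸ g.2)).1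

lemma ZS.rdvd_iff_of_mul_eq (zs : ZS K G H) (hK : ∀ x y : K, x * y = 1 → x = 1) {Δ : K} {h : H}
    {g : G} (hhg : (h : K) * g = Δ) (x : K) : RDvd x (g : K) ↔ RDvd x Δ ∧ x ∈ G := by
  refine ⟨fun ⟨u, hu⟩ => ⟨⟨h * u, by rw [← hhg, hu, mul_assoc]⟩, ?_⟩,
    fun ⟨hx, hxG⟩ => zs.rdvd_of_rdvd_mul hxG (hhg ▸ hx)⟩
  exact (zs.mem_of_mul_mem hK (hu ▸ g.2)).2

end ZappaSzep

section Garside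

variable {K : Type*} [Monoid K] {G H : Submonoid K} {Δ : K}

lemma ZS.meet_left (zs : ZS K G H) (gs : GarsideStructure K Δ) :
    ∀ x y : G, ∃ d, d ∣ x ∧ d ∣ y ∧ ∀ e, e ∣ x → e ∣ y → e ∣ d := by
  have hK := Atomic.eq_one_of_mul_eq_one gs.atomic
  intro x y
  obtain ⟨d, ⟨u, hu⟩, hdy, hmax⟩ := gs.meet_left x y
  have hd : d ∈ G := (zs.mem_of_mul_mem hK (hu ▸ x.2)).1
  simp only [← zs.coe_dvd_coe_iff hK]
  exact ⟨⟨d, hd⟩, ⟨u, hu⟩, hdy, fun e => hmax e⟩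

lemma ZS.meet_right (zs : ZS K G H) (gs : GarsideStructure K Δ) :
    ∀ x y : G, ∃ d, RDvd d x ∧ RDvd d y ∧ ∀ e, RDvd e x → RDvd e y → RDvd e d := by
  have hK := Atomic.eq_one_of_mul_eq_one gs.atomic
  intro x y
  obtain ⟨d, ⟨u, hu⟩, hdy, hmax⟩ := gs.meet_right x y
  have hd : d ∈ G := (zs.mem_of_mul_mem hK (hu ▸ x.2)).2
  simp only [← zs.coe_rdvd_coe_iff hK]
  exact ⟨⟨d, hd⟩, ⟨u, hu⟩, hdy, fun e => hmax e⟩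

-- The `G`-part of the join in `K` is the join in `G`.
lemma ZS.join_left (zs : ZS K G H) (gs : GarsideStructure K Δ) :
    ∀ x y : G, ∃ m, x ∣ m ∧ y ∣ m ∧ ∀ n, x ∣ n → y ∣ n → m ∣ n := by
  have hK := Atomic.eq_one_of_mul_eq_one gs.atomic
  intro x y
  obtain ⟨m, hxm, hym, hmin⟩ := gs.join_left x y
  obtain ⟨⟨g, h⟩, rfl, -⟩ := zs.exGH m
  simp only [← zs.coe_dvd_coe_iff hK]
  exact ⟨g, zs.dvd_of_dvd_mul x.2 hxm, zs.dvd_of_dvd_mul y.2 hym,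
    fun n hxn hyn => (dvd_mul_right _ _).trans (hmin n hxn hyn)⟩

lemma ZS.join_right (zs : ZS K G H) (gs : GarsideStructure K Δ) :
    ∀ x y : G, ∃ m, RDvd x m ∧ RDvd y m ∧ ∀ n, RDvd x n → RDvd y n → RDvd m n := by
  have hK := Atomic.eq_one_of_mul_eq_one gs.atomic
  intro x y
  obtain ⟨m, hxm, hym, hmin⟩ := gs.join_right x y
  obtain ⟨⟨h, g⟩, rfl, -⟩ := zs.exHG m
  simp only [← zs.coe_rdvd_coe_iff hK]
  refine ⟨g, zs.rdvd_of_rdvd_mul x.2 hxm, zs.rdvd_of_rdvd_mul y.2 hym, fun n hxn hyn => ?_⟩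
  obtain ⟨u, hu⟩ := hmin n hxn hyn
  exact ⟨u * h, by rw [hu, mul_assoc]⟩

lemma ZS.closure_dvd_eq_top (zs : ZS K G H) (gs : GarsideStructure K Δ) {d : G}
    (hdiv : ∀ x : K, x ∣ (d : K) ↔ x ∣ Δ ∧ x ∈ G) :
    Submonoid.closure {x : G | x ∣ d} = ⊤ := by
  have hK := Atomic.eq_one_of_mul_eq_one gs.atomic
  refine (Submonoid.eq_top_iff' _).2 fun g => ?_
  obtain ⟨l, hl, hprod⟩ := Submonoid.exists_list_of_mem_closure (s := {x : K | x ∣ Δ})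
    (gs.div_gen ▸ Submonoid.mem_top (g : K))
  lift l to List G using zs.forall_mem_of_prod_mem hK (hprod ▸ g.2)
  have hg : l.prod = g := Subtype.ext (by rw [Submonoid.coe_list_prod, hprod])
  rw [← hg]
  refine Submonoid.list_prod_mem _ fun a ha => Submonoid.subset_closure ?_
  exact (zs.coe_dvd_coe_iff hK).1 ((hdiv a).2 ⟨hl a (List.mem_map_of_mem ha), a.2⟩)

lemma ZS.garsideStructure (zs : ZS K G H) (gs : GarsideStructure K Δ) {d : G}
    (hbal : ∀ x : K, x ∣ (d : K) ↔ RDvd x (d : K))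
    (hdiv : ∀ x : K, x ∣ (d : K) ↔ x ∣ Δ ∧ x ∈ G) :
    GarsideStructure G d := by
  have hK := Atomic.eq_one_of_mul_eq_one gs.atomic
  refine ⟨fun a b c h => Subtype.ext (gs.mul_left_cancel a b c (congrArg Subtype.val h)),
    fun a b c h => Subtype.ext (gs.mul_right_cancel a b c (congrArg Subtype.val h)),
    zs.atomic gs.atomic, zs.meet_left gs, zs.join_left gs, zs.meet_right gs, zs.join_right gs,
    fun x => ?_, ?_, zs.closure_dvd_eq_top gs hdiv⟩
  · rw [← zs.coe_dvd_coe_iff hK, ← zs.coe_rdvd_coe_iff hK]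
    exact hbal x
  · refine (gs.div_finite.preimage Subtype.val_injective.injOn).subset fun x hx => ?_
    exact ((hdiv x).1 ((zs.coe_dvd_coe_iff hK).2 hx)).1

lemma ZS.coe_eq_of_mul_eq_of_mul_eq (zs : ZS K G H) (gs : GarsideStructure K Δ) {g g' : G}
    {h h' : H} (hgh : (g : K) * h = Δ) (hhg : (h' : K) * g' = Δ) : (g : K) = g' := by
  have hK := Atomic.eq_one_of_mul_eq_one gs.atomic
  obtain ⟨v, hv⟩ := (zs.rdvd_iff_of_mul_eq hK hhg g).2 ⟨(gs.balanced g).1 ⟨h, hgh.symm⟩, g.2⟩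
  obtain ⟨w, hw⟩ := (zs.dvd_iff_of_mul_eq hK hgh g').2 ⟨(gs.balanced g').2 ⟨h', hhg.symm⟩, g'.2⟩
  have hsandwich : (g : K) = v * g * w := by nth_rewrite 1 [hw]; rw [hv]
  have hv₁ : v = 1 := (gs.atomic.eq_one_of_eq_mul_mul hsandwich).1
  rw [hv, hv₁, one_mul]

lemma ZS.garside_left_factor (zs : ZS K G H) (gs : GarsideStructure K Δ) {g : G} {h h' : H}
    (hgh : (g : K) * h = Δ) (hhg : (h' : K) * g = Δ) :
    (∀ x : K, x ∣ (g : K) ↔ RDvd x (g : K)) ∧ (∀ x : K, x ∣ (g : K) ↔ (x ∣ Δ ∧ x ∈ G)) ∧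
      GarsideStructure G g := by
  have hK := Atomic.eq_one_of_mul_eq_one gs.atomic
  have hdiv := zs.dvd_iff_of_mul_eq hK hgh
  have hbal (x : K) : x ∣ (g : K) ↔ RDvd x (g : K) := by
    rw [hdiv, zs.rdvd_iff_of_mul_eq hK hhg, gs.balanced]
  exact ⟨hbal, hdiv, zs.garsideStructure gs hbal hdiv⟩

end Garside

end ZSPaper

open ZSPaper Function

theorem stmt16 {K : Type*} [Monoid K] {G H : Submonoid K} (zs : ZS K G H)
    (Δ : K) (gs : GarsideStructure K Δ) :
    ∀ (dG : G) (dH : H), (dG : K) * (dH : K) = Δ →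
      ((∀ x : K, x ∣ (dG : K) ↔ RDvd x (dG : K)) ∧
       (∀ x : K, x ∣ (dG : K) ↔ (x ∣ Δ ∧ x ∈ G)) ∧
       GarsideStructure G dG) ∧
      ((∀ x : K, x ∣ (dH : K) ↔ RDvd x (dH : K)) ∧
       (∀ x : K, x ∣ (dH : K) ↔ (x ∣ Δ ∧ x ∈ H)) ∧
       GarsideStructure H dH) := by
  intro dG dH hGH
  obtain ⟨⟨dH', dG'⟩, hHG, -⟩ := zs.exHG Δ
  have hG : (dG' : K) = dG := (zs.coe_eq_of_mul_eq_of_mul_eq gs hGH hHG).symm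
  have hH : (dH' : K) = dH := zs.swap.coe_eq_of_mul_eq_of_mul_eq gs hHG hGH
  exact ⟨zs.garside_left_factor gs hGH (hG ▸ hHG), zs.swap.garside_left_factor gs (hH ▸ hHG) hGH⟩
end
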